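/- arXiv:2204.00287 — 3 statements merged into one kernel-verified Lean document; each statement's English description precedes it below -/
import Mathlib

section
/- Let ϱ : ℝ^d → [0,1] be measurable, let S ⊆ ℝ^d be measurable with ϱ(k) = 1 for almost every k ∉ S, and let ψ = (ψ⁽ⁿ⁾)_{n≥0} ∈ F be such that a_k ψ ∈ F for almost every k and k ↦ ‖a_k ψ‖²_F is integrable over S. Then ∑_{n≥1} ∫_{ℝ^{d·n}} (1 − ϱ(k₁)²⋯ϱ(kₙ)²) |ψ⁽ⁿ⁾(k₁,…,kₙ)|² dk₁⋯dkₙ ≤ ∫_S ‖a_k ψ‖²_F dk; in other words, as quadratic forms, 1 − Γ(ϱ²) ≤ dΓ(χ_S). -/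
open MeasureTheory
open scoped ENNReal NNReal

noncomputable section

/-- `ℝ^d`. -/
abbrev KVec (d : ℕ) := EuclideanSpace ℝ (Fin d)

/-- `ℝ^{d·n}`, realized as `n`-tuples of vectors in `ℝ^d`. -/
abbrev KSpace (d n : ℕ) := Fin n → KVec d

/-- A function on `ℝ^{d·n}` is symmetric if it is a.e. invariant under permutations of its
`n` arguments in `ℝ^d`. -/
def IsSymFn {d n : ℕ} (ψ : KSpace d n → ℂ) : Prop :=
  ∀ σ : Equiv.Perm (Fin n), (fun K => ψ (K ∘ σ)) =ᵐ[(volume : Measure (KSpace d n))] ψ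

/-- `(a_k ψ)⁽ⁿ⁾(k₁,…,kₙ) = √(n+1) ψ⁽ⁿ⁺¹⁾(k,k₁,…,kₙ)`. -/
def aFun {d : ℕ} (ψ : ∀ n, KSpace d n → ℂ) (k : KVec d) (n : ℕ) : KSpace d n → ℂ :=
  fun K => (Real.sqrt (n + 1) : ℂ) * ψ (n + 1) (Fin.cons k K)

/-- The squared Fock norm `‖a_k ψ‖²_F`, as an extended nonnegative real. -/
def aNormSqE {d : ℕ} (ψ : ∀ n, KSpace d n → ℂ) (k : KVec d) : ℝ≥0∞ :=
  ∑' n : ℕ, ∫⁻ K : KSpace d n, (‖aFun ψ k n K‖₊ : ℝ≥0∞) ^ 2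

/-! For factors `ϱ(kᵢ)² ∈ [0,1]` one has `1 − ∏ ϱ(kᵢ)² ≤ ∑ (1 − ϱ(kᵢ)²) ≤ ∑ χ_S(kᵢ)`, the last
step because `ϱ = 1` off `S`. So the `n`-particle term is bounded by `⟨ψ⁽ⁿ⁾, dΓ(χ_S) ψ⁽ⁿ⁾⟩`. By the
permutation symmetry of `ψ⁽ⁿ⁾` each `χ_S(kᵢ)` contributes as much as `χ_S(k₁)`, and Fubini in the
first variable turns `n ∫ χ_S(k₁) |ψ⁽ⁿ⁾|²` into `∫_S ‖(a_k ψ)⁽ⁿ⁻¹⁾‖² dk`. -/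

theorem Finset.one_sub_prod_le_sum_one_sub {ι : Type*} (s : Finset ι) {a : ι → ℝ}
    (ha : ∀ i ∈ s, a i ∈ Set.Icc (0 : ℝ) 1) :
    1 - ∏ i ∈ s, a i ≤ ∑ i ∈ s, (1 - a i) := by
  classical
  induction s using Finset.induction_on with
  | empty => simp
  | insert j s hj ih =>
    rw [Finset.prod_insert hj, Finset.sum_insert hj]
    obtain ⟨hj0, hj1⟩ := ha j (Finset.mem_insert_self j s)
    have hs : ∀ i ∈ s, a i ∈ Set.Icc (0 : ℝ) 1 := fun i hi => ha i (Finset.mem_insert_of_mem hi)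
    have hP : 0 ≤ ∏ i ∈ s, a i := Finset.prod_nonneg fun i hi => (hs i hi).1
    have hP1 : ∏ i ∈ s, a i ≤ 1 :=
      Finset.prod_le_one (fun i hi => (hs i hi).1) fun i hi => (hs i hi).2
    nlinarith [ih hs]

theorem ofReal_one_sub_prod_sq_le_sum_indicator {X : Type*} {m : ℕ} {ϱ : X → ℝ}
    (hϱ : ∀ x, ϱ x ∈ Set.Icc (0 : ℝ) 1) {S : Set X} {K : Fin m → X}
    (hK : ∀ i, K i ∉ S → ϱ (K i) = 1) :
    ENNReal.ofReal (1 - ∏ i, ϱ (K i) ^ 2) ≤ ∑ i, S.indicator 1 (K i) := by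
  have hsq : ∀ x, ϱ x ^ 2 ∈ Set.Icc (0 : ℝ) 1 := fun x =>
    ⟨sq_nonneg _, pow_le_one₀ (hϱ x).1 (hϱ x).2⟩
  calc ENNReal.ofReal (1 - ∏ i, ϱ (K i) ^ 2)
      ≤ ENNReal.ofReal (∑ i, (1 - ϱ (K i) ^ 2)) :=
        ENNReal.ofReal_le_ofReal (Finset.univ.one_sub_prod_le_sum_one_sub fun i _ => hsq (K i))
    _ = ∑ i, ENNReal.ofReal (1 - ϱ (K i) ^ 2) :=
        ENNReal.ofReal_sum_of_nonneg fun i _ => sub_nonneg.2 (hsq (K i)).2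
    _ ≤ ∑ i, S.indicator 1 (K i) := by
        refine Finset.sum_le_sum fun i _ => ?_
        by_cases h : K i ∈ S
        · simpa [h] using (hsq (K i)).1
        · simp [h, hK i h]

section PiMeasure

variable {X : Type*} [MeasurableSpace X] {μ : Measure X} [SigmaFinite μ]

theorem MeasurableEquiv.coe_piCongrLeft_perm_symm {n : ℕ} (σ : Equiv.Perm (Fin n)) :
    ⇑(MeasurableEquiv.piCongrLeft (fun _ : Fin n => X) σ.symm) = fun K => K ∘ σ := by
  ext K i
  simp [MeasurableEquiv.piCongrLeft, Equiv.piCongrLeft]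

theorem lintegral_eval_mul_eq_of_perm_invariant {n : ℕ} {g : (Fin n → X) → ℝ≥0∞}
    (hg : ∀ σ : Equiv.Perm (Fin n), (fun K => g (K ∘ σ)) =ᵐ[Measure.pi fun _ => μ] g)
    (F : X → ℝ≥0∞) (i j : Fin n) :
    ∫⁻ K, F (K i) * g K ∂Measure.pi (fun _ => μ) =
      ∫⁻ K, F (K j) * g K ∂Measure.pi (fun _ => μ) := by
  set σ := Equiv.swap i j
  have hσ := measurePreserving_piCongrLeft (fun _ : Fin n => μ) σ.symm
  rw [hσ.lintegral_map_equiv, MeasurableEquiv.coe_piCongrLeft_perm_symm]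
  refine lintegral_congr_ae ?_
  filter_upwards [hg σ] with K hK
  simp [hK, σ]

theorem lintegral_sum_eval_mul_of_perm_invariant {n : ℕ} {g : (Fin (n + 1) → X) → ℝ≥0∞}
    (hg_meas : AEMeasurable g (Measure.pi fun _ => μ))
    (hg : ∀ σ : Equiv.Perm (Fin (n + 1)), (fun K => g (K ∘ σ)) =ᵐ[Measure.pi fun _ => μ] g)
    {F : X → ℝ≥0∞} (hF : Measurable F) :
    ∫⁻ K, (∑ i, F (K i)) * g K ∂Measure.pi (fun _ => μ) =
      (n + 1) * ∫⁻ K, F (K 0) * g K ∂Measure.pi (fun _ => μ) := by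
  simp_rw [Finset.sum_mul]
  rw [lintegral_finsetSum' (f := fun i K => F (K i) * g K) _ fun i _ =>
    (hF.comp (measurable_pi_apply i)).aemeasurable.mul hg_meas]
  simp_rw [lintegral_eval_mul_eq_of_perm_invariant hg F _ 0]
  simp

theorem MeasurableEquiv.coe_piFinSuccAbove_zero_symm {n : ℕ} :
    ⇑(MeasurableEquiv.piFinSuccAbove (fun _ : Fin (n + 1) => X) 0).symm =
      fun p => Fin.cons p.1 p.2 := by
  ext p
  simp [MeasurableEquiv.piFinSuccAbove, Fin.consEquiv]

theorem measurePreserving_fin_cons {n : ℕ} :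
    MeasurePreserving (fun p : X × (Fin n → X) => (Fin.cons p.1 p.2 : Fin (n + 1) → X))
      (μ.prod (Measure.pi fun _ => μ)) (Measure.pi fun _ => μ) := by
  rw [← MeasurableEquiv.coe_piFinSuccAbove_zero_symm]
  exact (measurePreserving_piFinSuccAbove (fun _ : Fin (n + 1) => μ) 0).symm

theorem AEMeasurable.lintegral_fin_cons {n : ℕ} {g : (Fin (n + 1) → X) → ℝ≥0∞}
    (hg : AEMeasurable g (Measure.pi fun _ => μ)) :
    AEMeasurable (fun k => ∫⁻ K, g (Fin.cons k K) ∂Measure.pi (fun _ => μ)) μ :=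
  (hg.comp_quasiMeasurePreserving
    measurePreserving_fin_cons.quasiMeasurePreserving).lintegral_prod_right'

theorem lintegral_eval_zero_mul {n : ℕ} {g : (Fin (n + 1) → X) → ℝ≥0∞}
    (hg : AEMeasurable g (Measure.pi fun _ => μ)) {F : X → ℝ≥0∞} (hF : Measurable F) :
    ∫⁻ K, F (K 0) * g K ∂Measure.pi (fun _ => μ) =
      ∫⁻ k, F k * ∫⁻ K, g (Fin.cons k K) ∂Measure.pi (fun _ => μ) ∂μ := by
  have hcons := hg.comp_quasiMeasurePreserving measurePreserving_fin_cons.quasiMeasurePreserving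
  rw [(measurePreserving_piFinSuccAbove (fun _ : Fin (n + 1) => μ) 0).symm.lintegral_map_equiv,
    MeasurableEquiv.coe_piFinSuccAbove_zero_symm]
  simp only [Fin.cons_zero]
  rw [lintegral_prod (fun p : X × (Fin n → X) => F p.1 * g (Fin.cons p.1 p.2))
    ((hF.comp measurable_fst).aemeasurable.mul hcons)]
  refine lintegral_congr_ae ?_
  filter_upwards [hcons.aestronglyMeasurable.prodMk_left] with k hk
  exact lintegral_const_mul'' _ hk.aemeasurable

end PiMeasure

section Fock

variable {d : ℕ}

/-- The `n`-particle part of the quadratic form `⟨ψ, dΓ(ω) ψ⟩`. -/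
def dGammaForm (ω : KVec d → ℝ≥0∞) (ψ : ∀ n, KSpace d n → ℂ) (n : ℕ) : ℝ≥0∞ :=
  ∫⁻ K : KSpace d n, (∑ i, ω (K i)) * (‖ψ n K‖₊ : ℝ≥0∞) ^ 2

theorem nnnorm_aFun_sq (ψ : ∀ n, KSpace d n → ℂ) (k : KVec d) (n : ℕ) (K : KSpace d n) :
    (‖aFun ψ k n K‖₊ : ℝ≥0∞) ^ 2 = (n + 1) * (‖ψ (n + 1) (Fin.cons k K)‖₊ : ℝ≥0∞) ^ 2 := by
  rw [aFun, nnnorm_mul, ENNReal.coe_mul, mul_pow, ← ENNReal.coe_pow, ← nnnorm_pow,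
    ← Complex.ofReal_pow, Real.sq_sqrt (by positivity)]
  congr 1
  exact_mod_cast Complex.nnnorm_natCast (n + 1)

theorem lintegral_nnnorm_aFun_sq (ψ : ∀ n, KSpace d n → ℂ) (k : KVec d) (n : ℕ) :
    ∫⁻ K : KSpace d n, (‖aFun ψ k n K‖₊ : ℝ≥0∞) ^ 2 =
      (n + 1) * ∫⁻ K : KSpace d n, (‖ψ (n + 1) (Fin.cons k K)‖₊ : ℝ≥0∞) ^ 2 := by
  simp_rw [nnnorm_aFun_sq]
  exact lintegral_const_mul' _ _ (by simp)

theorem IsSymFn.nnnorm_sq {n : ℕ} {φ : KSpace d n → ℂ} (hφ : IsSymFn φ) (σ : Equiv.Perm (Fin n)) :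
    (fun K => (‖φ (K ∘ σ)‖₊ : ℝ≥0∞) ^ 2) =ᵐ[volume] fun K => (‖φ K‖₊ : ℝ≥0∞) ^ 2 := by
  filter_upwards [hφ σ] with K hK
  rw [hK]

theorem dGammaForm_succ_eq_lintegral_aFun {ω : KVec d → ℝ≥0∞} (hω : Measurable ω)
    {ψ : ∀ n, KSpace d n → ℂ} {n : ℕ} (hψ_meas : AEStronglyMeasurable (ψ (n + 1)))
    (hψ_sym : IsSymFn (ψ (n + 1))) :
    dGammaForm ω ψ (n + 1) = ∫⁻ k, ω k * ∫⁻ K : KSpace d n, (‖aFun ψ k n K‖₊ : ℝ≥0∞) ^ 2 := by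
  have hg : AEMeasurable (fun K : KSpace d (n + 1) => (‖ψ (n + 1) K‖₊ : ℝ≥0∞) ^ 2) :=
    hψ_meas.enorm.pow_const 2
  rw [dGammaForm, volume_pi, lintegral_sum_eval_mul_of_perm_invariant hg hψ_sym.nnnorm_sq hω,
    lintegral_eval_zero_mul hg hω, ← lintegral_const_mul' _ _ (by simp)]
  simp_rw [lintegral_nnnorm_aFun_sq, mul_left_comm]
  rfl

theorem aemeasurable_lintegral_nnnorm_aFun_sq {ψ : ∀ n, KSpace d n → ℂ} {n : ℕ}
    (hψ_meas : AEStronglyMeasurable (ψ (n + 1))) :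
    AEMeasurable fun k => ∫⁻ K : KSpace d n, (‖aFun ψ k n K‖₊ : ℝ≥0∞) ^ 2 := by
  simp_rw [lintegral_nnnorm_aFun_sq]
  exact (hψ_meas.enorm.pow_const 2).lintegral_fin_cons.const_mul _

end Fock

theorem one_sub_gamma_le_dGamma_indicator_general (d : ℕ)
    (ϱ : KVec d → ℝ) (hϱ_range : ∀ k, ϱ k ∈ Set.Icc (0 : ℝ) 1)
    (S : Set (KVec d)) (hS : MeasurableSet S)
    (hϱ_one : ∀ᵐ k : KVec d, k ∉ S → ϱ k = 1)
    (ψ : ∀ n, KSpace d n → ℂ)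
    (hψ_mem : ∀ n, MemLp (ψ n) 2 (volume : Measure (KSpace d n)))
    (hψ_sym : ∀ n, IsSymFn (ψ n)) :
    (∑' n : ℕ, ∫⁻ K : KSpace d (n + 1),
        ENNReal.ofReal (1 - ∏ i : Fin (n + 1), (ϱ (K i)) ^ 2) * (‖ψ (n + 1) K‖₊ : ℝ≥0∞) ^ 2)
      ≤ ∫⁻ k in S, aNormSqE ψ k := by
  have hψ_meas n := (hψ_mem n).aestronglyMeasurable
  simp only [aNormSqE]
  rw [lintegral_tsum fun n => (aemeasurable_lintegral_nnnorm_aFun_sq (hψ_meas _)).restrict]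
  refine ENNReal.tsum_le_tsum fun n => ?_
  have hϱ_one_all : ∀ᵐ K : KSpace d (n + 1), ∀ i, K i ∉ S → ϱ (K i) = 1 :=
    ae_all_iff.2 fun i => (Measure.tendsto_eval_ae_ae (i := i)
      (μ := fun _ : Fin (n + 1) => (volume : Measure (KVec d)))).eventually hϱ_one
  calc _ ≤ dGammaForm (S.indicator 1) ψ (n + 1) := by
        refine lintegral_mono_ae ?_
        filter_upwards [hϱ_one_all] with K hK
        exact mul_le_mul_left (ofReal_one_sub_prod_sq_le_sum_indicator hϱ_range hK) _
    _ = ∫⁻ k, S.indicator 1 k * ∫⁻ K : KSpace d n, (‖aFun ψ k n K‖₊ : ℝ≥0∞) ^ 2 :=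
        dGammaForm_succ_eq_lintegral_aFun (measurable_one.indicator hS) (hψ_meas _) (hψ_sym _)
    _ = _ := by
        rw [← lintegral_indicator hS]
        congr with k
        by_cases hk : k ∈ S <;> simp [hk]

/-- Let `ϱ : ℝ^d → [0,1]` be measurable with `ϱ = 1` a.e. outside the measurable set `S`, and
let `ψ ∈ F` be such that `a_k ψ ∈ F` for a.e. `k` and `k ↦ ‖a_k ψ‖²_F` is integrable over
`S`. Then `∑_{n≥1} ∫ (1 − ϱ(k₁)²⋯ϱ(kₙ)²)|ψ⁽ⁿ⁾|² ≤ ∫_S ‖a_k ψ‖²_F dk`, i.e., as quadratic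
forms, `1 − Γ(ϱ²) ≤ dΓ(χ_S)`. -/
theorem one_sub_gamma_le_dGamma_indicator (d : ℕ)
    (ϱ : KVec d → ℝ) (hϱ_meas : Measurable ϱ) (hϱ_range : ∀ k, ϱ k ∈ Set.Icc (0 : ℝ) 1)
    (S : Set (KVec d)) (hS : MeasurableSet S)
    (hϱ_one : ∀ᵐ k : KVec d, k ∉ S → ϱ k = 1)
    (ψ : ∀ n, KSpace d n → ℂ)
    (hψ_mem : ∀ n, MemLp (ψ n) 2 (volume : Measure (KSpace d n)))
    (hψ_sym : ∀ n, IsSymFn (ψ n))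
    (hψ_Fock : (∑' n : ℕ, ∫⁻ K : KSpace d n, (‖ψ n K‖₊ : ℝ≥0∞) ^ 2) < ⊤)
    (haψ : ∀ᵐ k : KVec d,
      (∀ n, MemLp (aFun ψ k n) 2 (volume : Measure (KSpace d n))) ∧ aNormSqE ψ k < ⊤)
    (hint : (∫⁻ k in S, aNormSqE ψ k) < ⊤) :
    (∑' n : ℕ, ∫⁻ K : KSpace d (n + 1),
        ENNReal.ofReal (1 - ∏ i : Fin (n + 1), (ϱ (K i)) ^ 2) * (‖ψ (n + 1) K‖₊ : ℝ≥0∞) ^ 2)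
      ≤ ∫⁻ k in S, aNormSqE ψ k :=
  one_sub_gamma_le_dGamma_indicator_general d ϱ hϱ_range S hS hϱ_one ψ hψ_mem hψ_sym
end
end

section
/- Let n ≥ 1 and let ψ ∈ L²(ℝ^{d·n}) be invariant under permutations of its n ℝ^d-arguments. Then for every R > 0, ∫_{{|(k₁,…,kₙ)| > R}} |ψ(k₁,…,kₙ)|² dk₁⋯dkₙ ≤ ∫_{{k ∈ ℝ^d : |k| > R/n}} ‖a_k ψ‖²_{L²(ℝ^{d·(n−1)})} dk, where |(k₁,…,kₙ)| denotes the Euclidean norm on ℝ^{d·n}. -/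
/- STATEMENT 6: localization estimate for a symmetric `n`-particle wave function:
`∫_{|(k₁,…,kₙ)|>R} |ψ|² ≤ ∫_{|k|>R/n} ‖a_k ψ‖² dk`.
Here the `n`-particle space (`n ≥ 1`) is indexed as `n + 1` with `n : ℕ`, and the Euclidean
norm on `ℝ^{d·n}` is expressed via `|(k₁,…,kₙ)|² = ∑ ‖kᵢ‖²`. -/

open MeasureTheory

noncomputable section

/-- The pointwise annihilation operator on the `(n+1)`-particle space:
`(a_k ψ)(k₁,…,kₙ) = √(n+1) ψ(k,k₁,…,kₙ)`. -/
def aFun1 {d n : ℕ} (ψ : KSpace d (n + 1) → ℂ) (k : KVec d) : KSpace d n → ℂ :=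
  fun K => (Real.sqrt (n + 1) : ℂ) * ψ (Fin.cons k K)

/-! If `|(k₁,…,k_{n+1})| > R`, some `|kᵢ|` exceeds `R/(n+1)`, so the tail
integral is at most the sum over `i` of the integrals over `{|kᵢ| > R/(n+1)}`. By symmetry of `ψ`
these `n+1` integrals coincide, and by Fubini each equals `(n+1)⁻¹ ∫_{|k|>R/(n+1)} ‖a_k ψ‖² dk`. -/

theorem exists_lt_of_sq_lt_sum_sq {ι : Type*} [Fintype ι] {x : ι → ℝ} (hx : 0 ≤ x) {R : ℝ}
    (hR : R ^ 2 < ∑ i, x i ^ 2) : ∃ i, R / Fintype.card ι < x i := by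
  by_contra! h
  rcases isEmpty_or_nonempty ι with _ | ⟨⟨i₀⟩⟩
  · simp only [Finset.univ_eq_empty, Finset.sum_empty] at hR
    nlinarith [sq_nonneg R]
  have hc : (1 : ℝ) ≤ Fintype.card ι := by exact_mod_cast Fintype.card_pos_iff.2 ⟨i₀⟩
  have : ∑ i, x i ^ 2 ≤ R ^ 2 / Fintype.card ι :=
    calc ∑ i, x i ^ 2 ≤ ∑ _i : ι, (R / Fintype.card ι) ^ 2 :=
          Finset.sum_le_sum fun i _ => pow_le_pow_left₀ (hx i) (h i) 2
      _ = R ^ 2 / Fintype.card ι := by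
        rw [Finset.sum_const, Finset.card_univ, nsmul_eq_mul]; field_simp
  linarith [div_le_self (sq_nonneg R) hc]

theorem setIntegral_le_sum_setIntegral_of_subset_iUnion {X ι : Type*} [MeasurableSpace X]
    [Fintype ι] {μ : Measure X} {f : X → ℝ} (hf_nonneg : 0 ≤ f) (hf : Integrable f μ)
    {S : Set X} {s : ι → Set X} (hS : S ⊆ ⋃ i, s i) :
    ∫ x in S, f x ∂μ ≤ ∑ i, ∫ x in s i, f x ∂μ := by
  have hle : μ.restrict S ≤ ∑ i, μ.restrict (s i) :=
    (Measure.restrict_mono hS le_rfl).trans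
      (Measure.sum_fintype (fun i => μ.restrict (s i)) ▸ Measure.restrict_iUnion_le)
  calc ∫ x in S, f x ∂μ ≤ ∫ x, f x ∂(∑ i, μ.restrict (s i)) :=
        integral_mono_measure hle (.of_forall hf_nonneg)
          (integrable_finsetSum_measure.2 fun i _ => hf.restrict)
    _ = ∑ i, ∫ x in s i, f x ∂μ := integral_finsetSum_measure fun i _ => hf.restrict

theorem setIntegral_eval_zero_mem {α E : Type*} [MeasureSpace α]
    [SigmaFinite (volume : Measure α)] [NormedAddCommGroup E] [NormedSpace ℝ E] {n : ℕ}
    {f : (Fin (n + 1) → α) → E} (hf : Integrable f) (A : Set α) :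
    ∫ K in {K | K 0 ∈ A}, f K = ∫ k in A, ∫ K, f (Fin.cons k K) := by
  have he := (volume_preserving_piFinSuccAbove (fun _ : Fin (n + 1) => α) 0).symm
  set e := MeasurableEquiv.piFinSuccAbove (fun _ : Fin (n + 1) => α) 0
  have he_symm : ∀ p : α × (Fin n → α), e.symm p = Fin.cons p.1 p.2 :=
    fun p => Fin.insertNth_zero' p.1 p.2
  have hpre : e.symm ⁻¹' {K | K 0 ∈ A} = A ×ˢ Set.univ := by
    ext p; simp [he_symm]
  rw [← he.setIntegral_preimage_emb e.symm.measurableEmbedding, hpre, Measure.volume_eq_prod,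
    setIntegral_prod _ ?int]
  · simp [he_symm]
  · rw [← Measure.volume_eq_prod]
    exact ((he.integrable_comp_emb e.symm.measurableEmbedding).2 hf).integrableOn

theorem IsSymFn.setIntegral_eval_mem_eq {d n : ℕ} {ψ : KSpace d n → ℂ} (hψ : IsSymFn ψ)
    {E : Type*} [NormedAddCommGroup E] [NormedSpace ℝ E] (F : ℂ → E) (A : Set (KVec d))
    (i j : Fin n) :
    ∫ K in {K | K i ∈ A}, F (ψ K) = ∫ K in {K | K j ∈ A}, F (ψ K) := by
  set e := MeasurableEquiv.arrowCongr' (Equiv.swap i j) (MeasurableEquiv.refl (KVec d))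
  have he : MeasurePreserving e := volume_preserving_arrowCongr' _ _ (.id volume)
  have he_apply : ∀ K, e K = K ∘ Equiv.swap i j := fun K => rfl
  have hpre : e ⁻¹' {K | K j ∈ A} = {K | K i ∈ A} := by
    ext K; simp [he_apply]
  rw [← hpre, ← he.setIntegral_preimage_emb e.measurableEmbedding _ {K | K j ∈ A}]
  refine integral_congr_ae (ae_restrict_of_ae ?_)
  filter_upwards [hψ (Equiv.swap i j)] with K hK
  rw [he_apply, hK]

theorem norm_aFun1_sq {d n : ℕ} (ψ : KSpace d (n + 1) → ℂ) (k : KVec d) (K : KSpace d n) :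
    ‖aFun1 ψ k K‖ ^ 2 = (n + 1) * ‖ψ (Fin.cons k K)‖ ^ 2 := by
  rw [aFun1, norm_mul, mul_pow, Complex.norm_real, Real.norm_of_nonneg (Real.sqrt_nonneg _),
    Real.sq_sqrt (by positivity)]

theorem high_momentum_tail_bound_general (d n : ℕ) (ψ : KSpace d (n + 1) → ℂ)
    (hψ_mem : MemLp ψ 2 (volume : Measure (KSpace d (n + 1))))
    (hψ_sym : IsSymFn ψ) (R : ℝ) :
    (∫ K in {K : KSpace d (n + 1) | R ^ 2 < ∑ i : Fin (n + 1), ‖K i‖ ^ 2}, ‖ψ K‖ ^ 2) ≤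
      ∫ k in {k : KVec d | R / (n + 1 : ℝ) < ‖k‖},
        ∫ K : KSpace d n, ‖aFun1 ψ k K‖ ^ 2 := by
  set A := {k : KVec d | R / (n + 1 : ℝ) < ‖k‖}
  have hint : Integrable (fun K => ‖ψ K‖ ^ 2) := hψ_mem.integrable_norm_pow two_ne_zero
  have hcover : {K : KSpace d (n + 1) | R ^ 2 < ∑ i, ‖K i‖ ^ 2} ⊆ ⋃ i, {K | K i ∈ A} := by
    intro K hK
    simpa [A] using exists_lt_of_sq_lt_sum_sq (fun i => norm_nonneg (K i)) hK
  calc (∫ K in {K : KSpace d (n + 1) | R ^ 2 < ∑ i, ‖K i‖ ^ 2}, ‖ψ K‖ ^ 2)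
      ≤ ∑ i : Fin (n + 1), ∫ K in {K | K i ∈ A}, ‖ψ K‖ ^ 2 :=
        setIntegral_le_sum_setIntegral_of_subset_iUnion (fun K => sq_nonneg _) hint hcover
    _ = (n + 1) * ∫ K in {K | K 0 ∈ A}, ‖ψ K‖ ^ 2 := by
        simp [hψ_sym.setIntegral_eval_mem_eq (‖·‖ ^ 2) A _ 0]
    _ = (n + 1) * ∫ k in A, ∫ K : KSpace d n, ‖ψ (Fin.cons k K)‖ ^ 2 := by
        rw [setIntegral_eval_zero_mem hint]
    _ = ∫ k in A, ∫ K : KSpace d n, ‖aFun1 ψ k K‖ ^ 2 := by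
        simp only [norm_aFun1_sq, integral_const_mul]

/-- For a permutation-symmetric `ψ ∈ L²(ℝ^{d·(n+1)})` and any `R > 0`,
`∫_{|(k₁,…,k_{n+1})| > R} |ψ|² ≤ ∫_{|k| > R/(n+1)} ‖a_k ψ‖² dk`. -/
theorem high_momentum_tail_bound (d n : ℕ) (ψ : KSpace d (n + 1) → ℂ)
    (hψ_mem : MemLp ψ 2 (volume : Measure (KSpace d (n + 1))))
    (hψ_sym : IsSymFn ψ) (R : ℝ) (hR : 0 < R) :
    (∫ K in {K : KSpace d (n + 1) | R ^ 2 < ∑ i : Fin (n + 1), ‖K i‖ ^ 2}, ‖ψ K‖ ^ 2) ≤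
      ∫ k in {k : KVec d | R / (n + 1 : ℝ) < ‖k‖},
        ∫ K : KSpace d n, ‖aFun1 ψ k K‖ ^ 2 :=
  high_momentum_tail_bound_general d n ψ hψ_mem hψ_sym R
end
end

section
/- Let n ≥ 1, let ψ ∈ L²(ℝ^{d·n}) be invariant under permutations of its n ℝ^d-arguments, let ϱ : ℝ^d → [0,1] be measurable, and let G(k₁,…,kₙ) = ϱ(k₁)⋯ϱ(kₙ) ψ(k₁,…,kₙ). Then for every p = (p₁,…,pₙ) ∈ ℝ^{d·n}, ‖τ_p G − G‖²_{L²(ℝ^{d·n})} ≤ ∑_{ℓ=1}^{n} ∫_{ℝ^d} ‖ϱ(k+p_ℓ) a_{k+p_ℓ} ψ − ϱ(k) a_k ψ‖²_{L²(ℝ^{d·(n−1)})} dk, where τ_p G(x) = G(x+p). -/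
/-!
Translate one variable at a time: passing through the intermediate shifts
`(p₁, …, p_ℓ, 0, …, 0)` telescopes `τ_p G − G` into `n` terms, the `ℓ`-th of which shifts only
`k_ℓ`. In that term the product of the other factors `ϱ(k_i)` has modulus at most `1`, leaving
`ϱ(k_ℓ + p_ℓ) ψ(…, k_ℓ + p_ℓ, …) − ϱ(k_ℓ) ψ(…)`. Cauchy–Schwarz on the sum of `n` terms costs a
factor `n`, which is exactly the `(√n)²` in `a_k`. Translation invariance of Lebesgue measure
removes the partial shifts, and the permutation symmetry of `ψ` moves `k_ℓ` into the first slot,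
where the `L²` norm splits by Fubini into `∫ ‖ϱ(k + p_ℓ) a_{k+p_ℓ} ψ − ϱ(k) a_k ψ‖² dk`.
-/

open MeasureTheory

noncomputable section

/-- `G = Γ(ϱ)ψ` on the `(n+1)`-particle sector: `G(k₁,…,kₙ) = ϱ(k₁)⋯ϱ(kₙ)ψ(k₁,…,kₙ)`. -/
def gammaFun {d n : ℕ} (ϱ : KVec d → ℝ) (ψ : KSpace d n → ℂ) : KSpace d n → ℂ :=
  fun K => (∏ i : Fin n, (ϱ (K i) : ℂ)) * ψ K

section Prefix

variable {m : ℕ} {E : Type*}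

def prefixVec [Zero E] (p : Fin m → E) (j : ℕ) : Fin m → E :=
  fun i => if (i : ℕ) < j then p i else 0

@[simp] lemma prefixVec_zero [Zero E] (p : Fin m → E) : prefixVec p 0 = 0 := by
  ext i; simp [prefixVec]

@[simp] lemma prefixVec_self [Zero E] (p : Fin m → E) : prefixVec p m = p := by
  ext i; simp [prefixVec]

variable [AddZeroClass E] (p : Fin m → E)

lemma prefixVec_succ (ℓ : Fin m) :
    prefixVec p (ℓ + 1) = prefixVec p ℓ + Pi.single ℓ (p ℓ) := by
  ext i
  rcases lt_trichotomy i ℓ with h | rfl | h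
  · simp [prefixVec, h.ne, Fin.lt_def.1 h, Nat.lt_succ_of_lt (Fin.lt_def.1 h)]
  · simp [prefixVec]
  · simp [prefixVec, h.ne', (Fin.lt_def.1 h).not_gt, Nat.not_lt.2 (Fin.lt_def.1 h)]

lemma sub_eq_sum_prefixVec {F : Type*} [AddCommGroup F] (f : (Fin m → E) → F) :
    f p - f 0 = ∑ ℓ : Fin m, (f (prefixVec p ℓ + Pi.single ℓ (p ℓ)) - f (prefixVec p ℓ)) := by
  simp_rw [← prefixVec_succ]
  rw [Fin.sum_univ_eq_sum_range (fun j => f (prefixVec p (j + 1)) - f (prefixVec p j)),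
    Finset.sum_range_sub (fun j => f (prefixVec p j)), prefixVec_self, prefixVec_zero]

end Prefix

lemma norm_sum_sq_le_card_mul {ι F : Type*} [Fintype ι] [SeminormedAddCommGroup F] (z : ι → F) :
    ‖∑ i, z i‖ ^ 2 ≤ Fintype.card ι * ∑ i, ‖z i‖ ^ 2 :=
  (pow_le_pow_left₀ (norm_nonneg _) (norm_sum_le _ _) 2).trans sq_sum_le_card_mul_sum_sq

lemma MeasureTheory.MemLp.ofReal_mul_of_abs_le_one {α : Type*} [MeasurableSpace α] {μ : Measure α}
    {p : ENNReal} {f : α → ℂ} {g : α → ℝ} (hf : MemLp f p μ) (hg : AEStronglyMeasurable g μ)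
    (hg1 : ∀ x, |g x| ≤ 1) : MemLp (fun x => (g x : ℂ) * f x) p μ :=
  hf.of_le ((Complex.continuous_ofReal.comp_aestronglyMeasurable hg).mul hf.1) <|
    ae_of_all _ fun x => by
      rw [norm_mul, Complex.norm_real, Real.norm_eq_abs]
      exact mul_le_of_le_one_left (norm_nonneg _) (hg1 x)

lemma integral_comp_perm {ι E G : Type*} [Fintype ι] [DecidableEq ι] [MeasureSpace E]
    [SigmaFinite (volume : Measure E)] [NormedAddCommGroup G] [NormedSpace ℝ G]
    (σ : Equiv.Perm ι) (f : (ι → E) → G) : ∫ X, f (X ∘ σ) = ∫ X, f X := by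
  have hσ := volume_measurePreserving_piCongrLeft (fun _ : ι => E) σ
  rw [← hσ.integral_comp']
  congr 1
  ext X
  congr 1
  ext i
  simp [MeasurableEquiv.coe_piCongrLeft, Equiv.piCongrLeft_apply]

lemma integral_eq_integral_integral_finCons {E : Type*} [MeasureSpace E]
    [SigmaFinite (volume : Measure E)] {n : ℕ} {f : (Fin (n + 1) → E) → ℝ}
    (hf : Integrable f) : ∫ X, f X = ∫ k, ∫ K, f (Fin.cons k K) := by
  have hcons := (measurePreserving_piFinSuccAbove (fun _ : Fin (n + 1) => (volume : Measure E))
    0).symm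
  rw [← volume_pi, ← volume_pi, ← Measure.volume_eq_prod] at hcons
  rw [← hcons.integral_comp', Measure.volume_eq_prod, integral_prod]
  · simp [MeasurableEquiv.piFinSuccAbove_symm_apply, Fin.consEquiv]
  · exact (hcons.integrable_comp_emb (MeasurableEquiv.measurableEmbedding _)).2 hf

lemma finCons_add_single_zero {E : Type*} [AddCommMonoid E] {n : ℕ} (k v : E) (K : Fin n → E) :
    (Fin.cons k K : Fin (n + 1) → E) + Pi.single 0 v = Fin.cons (k + v) K := by
  ext1 i
  refine Fin.cases ?_ (fun j => ?_) i <;> simp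

section ShiftDiff

variable {d m : ℕ} (ϱ : KVec d → ℝ) (ψ : KSpace d m → ℂ)

def shiftDiff (ℓ : Fin m) (v : KVec d) (X : KSpace d m) : ℂ :=
  ϱ (X ℓ + v) * ψ (X + Pi.single ℓ v) - ϱ (X ℓ) * ψ X

lemma gammaFun_add_single_sub (ℓ : Fin m) (v : KVec d) (X : KSpace d m) :
    gammaFun ϱ ψ (X + Pi.single ℓ v) - gammaFun ϱ ψ X
      = (∏ i ∈ Finset.univ.erase ℓ, (ϱ (X i) : ℂ)) * shiftDiff ϱ ψ ℓ v X := by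
  have hrest : ∏ i ∈ Finset.univ.erase ℓ, (ϱ (X i + (Pi.single ℓ v : KSpace d m) i) : ℂ)
      = ∏ i ∈ Finset.univ.erase ℓ, (ϱ (X i) : ℂ) :=
    Finset.prod_congr rfl fun i hi => by simp [Finset.ne_of_mem_erase hi]
  simp only [gammaFun, shiftDiff, ← Finset.mul_prod_erase Finset.univ _ (Finset.mem_univ ℓ),
    Pi.add_apply, Pi.single_eq_same, hrest]
  ring

variable {ϱ}

lemma norm_gammaFun_add_single_sub_le (hϱ : ∀ k, |ϱ k| ≤ 1) (ℓ : Fin m) (v : KVec d)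
    (X : KSpace d m) :
    ‖gammaFun ϱ ψ (X + Pi.single ℓ v) - gammaFun ϱ ψ X‖ ≤ ‖shiftDiff ϱ ψ ℓ v X‖ := by
  rw [gammaFun_add_single_sub, norm_mul, norm_prod]
  refine mul_le_of_le_one_left (norm_nonneg _) (Finset.prod_le_one (fun _ _ => norm_nonneg _) ?_)
  intro i _
  simpa using hϱ (X i)

lemma norm_gammaFun_add_sub_sq_le (hϱ : ∀ k, |ϱ k| ≤ 1) (p X : KSpace d m) :
    ‖gammaFun ϱ ψ (X + p) - gammaFun ϱ ψ X‖ ^ 2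
      ≤ m * ∑ ℓ, ‖shiftDiff ϱ ψ ℓ (p ℓ) (X + prefixVec p ℓ)‖ ^ 2 := by
  have htel := sub_eq_sum_prefixVec p (fun Y => gammaFun ϱ ψ (X + Y))
  simp only [add_zero, ← add_assoc] at htel
  rw [htel]
  refine (norm_sum_sq_le_card_mul _).trans ?_
  rw [Fintype.card_fin]
  gcongr with ℓ
  exact norm_gammaFun_add_single_sub_le ψ hϱ ℓ _ _

variable {ψ}

lemma memLp_shiftDiff (hψ : MemLp ψ 2) (hϱm : Measurable ϱ) (hϱ : ∀ k, |ϱ k| ≤ 1)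
    (ℓ : Fin m) (v : KVec d) : MemLp (shiftDiff ϱ ψ ℓ v) 2 := by
  have htrans : MemLp (fun X : KSpace d m => ψ (X + Pi.single ℓ v)) 2 :=
    hψ.comp_measurePreserving (measurePreserving_add_right (volume : Measure (KSpace d m)) _)
  refine MemLp.sub (htrans.ofReal_mul_of_abs_le_one ?_ fun _ => hϱ _)
    (hψ.ofReal_mul_of_abs_le_one ?_ fun _ => hϱ _)
  · exact (hϱm.comp (by fun_prop)).aestronglyMeasurable
  · exact (hϱm.comp (measurable_pi_apply ℓ)).aestronglyMeasurable

lemma integrable_norm_sq_shiftDiff (hψ : MemLp ψ 2) (hϱm : Measurable ϱ) (hϱ : ∀ k, |ϱ k| ≤ 1)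
    (ℓ : Fin m) (v : KVec d) : Integrable fun X => ‖shiftDiff ϱ ψ ℓ v X‖ ^ 2 :=
  (memLp_shiftDiff hψ hϱm hϱ ℓ v).integrable_norm_pow two_ne_zero

theorem integral_norm_gammaFun_add_sub_sq_le (hψ : MemLp ψ 2) (hϱm : Measurable ϱ)
    (hϱ : ∀ k, |ϱ k| ≤ 1) (p : KSpace d m) :
    ∫ X, ‖gammaFun ϱ ψ (X + p) - gammaFun ϱ ψ X‖ ^ 2
      ≤ m * ∑ ℓ, ∫ X, ‖shiftDiff ϱ ψ ℓ (p ℓ) X‖ ^ 2 := by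
  have hint (ℓ : Fin m) :
      Integrable fun X => ‖shiftDiff ϱ ψ ℓ (p ℓ) (X + prefixVec p ℓ)‖ ^ 2 :=
    (integrable_norm_sq_shiftDiff hψ hϱm hϱ ℓ (p ℓ)).comp_add_right _
  calc ∫ X, ‖gammaFun ϱ ψ (X + p) - gammaFun ϱ ψ X‖ ^ 2
      ≤ ∫ X, m * ∑ ℓ, ‖shiftDiff ϱ ψ ℓ (p ℓ) (X + prefixVec p ℓ)‖ ^ 2 :=
        integral_mono_of_nonneg (ae_of_all _ fun _ => by positivity)
          ((integrable_finsetSum _ fun ℓ _ => hint ℓ).const_mul _)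
          (ae_of_all _ (norm_gammaFun_add_sub_sq_le ψ hϱ p))
    _ = m * ∑ ℓ, ∫ X, ‖shiftDiff ϱ ψ ℓ (p ℓ) X‖ ^ 2 := by
        rw [integral_const_mul, integral_finsetSum _ fun ℓ _ => hint ℓ]
        congr 1
        exact Finset.sum_congr rfl fun ℓ _ =>
          integral_add_right_eq_self (fun X => ‖shiftDiff ϱ ψ ℓ (p ℓ) X‖ ^ 2) _

lemma shiftDiff_comp_perm_ae (hsym : IsSymFn ψ) (σ : Equiv.Perm (Fin m)) (j : Fin m)
    (v : KVec d) : (fun X => shiftDiff ϱ ψ j v (X ∘ σ)) =ᵐ[volume] shiftDiff ϱ ψ (σ j) v := by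
  have htrans : (fun X => ψ ((X + Pi.single (σ j) v) ∘ σ)) =ᵐ[volume]
      fun X => ψ (X + (Pi.single (σ j) v : KSpace d m)) :=
    (measurePreserving_add_right volume _).quasiMeasurePreserving.ae_eq_comp (hsym σ)
  filter_upwards [hsym σ, htrans] with X hX hXv
  have hcomp : X ∘ σ + Pi.single j v = (X + Pi.single (σ j) v) ∘ σ := by
    ext1 i
    simp [Pi.single_apply, σ.injective.eq_iff]
  simp only [shiftDiff, Function.comp_apply, hcomp, hX, hXv]

lemma integral_norm_sq_shiftDiff_perm (hsym : IsSymFn ψ) (σ : Equiv.Perm (Fin m)) (j : Fin m)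
    (v : KVec d) :
    ∫ X, ‖shiftDiff ϱ ψ j v X‖ ^ 2 = ∫ X, ‖shiftDiff ϱ ψ (σ j) v X‖ ^ 2 := by
  rw [← integral_comp_perm σ]
  exact integral_congr_ae <| (shiftDiff_comp_perm_ae (ϱ := ϱ) hsym σ j v).mono fun X hX => by
    simp only [hX]

end ShiftDiff

lemma integral_norm_sq_shiftDiff_zero {d n : ℕ} {ϱ : KVec d → ℝ} {ψ : KSpace d (n + 1) → ℂ}
    (v : KVec d) (hint : Integrable fun X => ‖shiftDiff ϱ ψ 0 v X‖ ^ 2) :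
    ((n : ℝ) + 1) * ∫ X, ‖shiftDiff ϱ ψ 0 v X‖ ^ 2
      = ∫ k, ∫ K, ‖(ϱ (k + v) : ℂ) * aFun1 ψ (k + v) K - (ϱ k : ℂ) * aFun1 ψ k K‖ ^ 2 := by
  rw [integral_eq_integral_integral_finCons hint, ← integral_const_mul]
  congr 1 with k
  rw [← integral_const_mul]
  congr 1 with K
  have hfactor : (ϱ (k + v) : ℂ) * aFun1 ψ (k + v) K - (ϱ k : ℂ) * aFun1 ψ k K
      = (Real.sqrt (n + 1) : ℂ) * shiftDiff ϱ ψ 0 v (Fin.cons k K) := by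
    simp only [aFun1, shiftDiff, finCons_add_single_zero, Fin.cons_zero]
    ring
  rw [hfactor, norm_mul, mul_pow, Complex.norm_real, Real.norm_of_nonneg (Real.sqrt_nonneg _),
    Real.sq_sqrt (by positivity)]

/-- For a permutation-symmetric `ψ ∈ L²(ℝ^{d·(n+1)})`, measurable `ϱ : ℝ^d → [0,1]`,
`G = Γ(ϱ)ψ` and any `p = (p₁,…,p_{n+1}) ∈ ℝ^{d·(n+1)}`,
`‖τ_p G − G‖² ≤ ∑_ℓ ∫ ‖ϱ(k+p_ℓ) a_{k+p_ℓ}ψ − ϱ(k) a_k ψ‖² dk`,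
where `τ_p G (x) = G (x + p)`. -/
theorem translation_difference_bound (d n : ℕ) (ψ : KSpace d (n + 1) → ℂ)
    (hψ_mem : MemLp ψ 2 (volume : Measure (KSpace d (n + 1))))
    (hψ_sym : IsSymFn ψ)
    (ϱ : KVec d → ℝ) (hϱ_meas : Measurable ϱ) (hϱ_range : ∀ k, ϱ k ∈ Set.Icc (0 : ℝ) 1)
    (p : KSpace d (n + 1)) :
    (∫ K : KSpace d (n + 1), ‖gammaFun ϱ ψ (K + p) - gammaFun ϱ ψ K‖ ^ 2) ≤
      ∑ ℓ : Fin (n + 1), ∫ k : KVec d, ∫ K : KSpace d n,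
        ‖(ϱ (k + p ℓ) : ℂ) * aFun1 ψ (k + p ℓ) K - (ϱ k : ℂ) * aFun1 ψ k K‖ ^ 2 := by
  have hϱ (k : KVec d) : |ϱ k| ≤ 1 :=
    abs_le.2 ⟨by linarith [(hϱ_range k).1], (hϱ_range k).2⟩
  calc (∫ K, ‖gammaFun ϱ ψ (K + p) - gammaFun ϱ ψ K‖ ^ 2)
      ≤ (n + 1 : ℕ) * ∑ ℓ, ∫ X, ‖shiftDiff ϱ ψ ℓ (p ℓ) X‖ ^ 2 :=
        integral_norm_gammaFun_add_sub_sq_le hψ_mem hϱ_meas hϱ p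
    _ = ∑ ℓ, ((n : ℝ) + 1) * ∫ X, ‖shiftDiff ϱ ψ 0 (p ℓ) X‖ ^ 2 := by
        push_cast
        rw [Finset.mul_sum]
        refine Finset.sum_congr rfl fun ℓ _ => ?_
        rw [integral_norm_sq_shiftDiff_perm hψ_sym (Equiv.swap ℓ 0), Equiv.swap_apply_left]
    _ = _ := Finset.sum_congr rfl fun ℓ _ => integral_norm_sq_shiftDiff_zero (p ℓ)
          (integrable_norm_sq_shiftDiff hψ_mem hϱ_meas hϱ 0 (p ℓ))
end
end
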